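/- arXiv:1203.6610 — 8 statements merged into one kernel-verified Lean document; each statement's English description precedes it below -/
import Mathlib

section
/- In the monopoly setting, for every partition π of G and every buyer b' ∈ B, Σ_{Ḡ∈π} V̄1(B,Ḡ) − Σ_{Ḡ∈π} V̄1(B∖{b'},Ḡ) = Σ_{Ḡ∈π} max(v_{b'}(Ḡ) − V̄2(B,Ḡ), 0); that is, the decrease in (unnormalized) social welfare caused by removing buyer b' equals b''s utility in b''s presence. -/
open Finset

variable {B G S : Type*} [Fintype B] [Fintype G] [Fintype S]
variable [DecidableEq B] [DecidableEq G] [DecidableEq S]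

/-- `v_b(Ḡ)`: buyer `b`'s total valuation of the variants in `Ḡ`. -/
def vsum (v : B → G → ℕ) (b : B) (Gb : Finset G) : ℕ := ∑ g ∈ Gb, v b g

/-- `V̄1(B̄,Ḡ)`: the largest value among `(v_b(Ḡ))_{b∈B̄}` (`0` if `B̄ = ∅`). -/
def V1 (v : B → G → ℕ) (Bb : Finset B) (Gb : Finset G) : ℕ :=
  Bb.sup (fun b => vsum v b Gb)

/-- `V̄2(B̄,Ḡ)`: the second-largest value, counted with multiplicity
(`0` if `|B̄| ≤ 1`).  It equals the minimum, over removal of one buyer,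
of the maximum over the remaining buyers. -/
def V2 (v : B → G → ℕ) (Bb : Finset B) (Gb : Finset G) : ℕ :=
  if h : Bb.Nonempty then Bb.inf' h (fun b => V1 v (Bb.erase b) Gb) else 0

/-- The set of buyers choosing seller `s` under the assignment `σ`. -/
def buyersOf (σ : B → S) (s : S) : Finset B := univ.filter (fun b => σ b = s)

/-- Buyer `b`'s utility in the multi-seller game. -/
def ubuyer (v : B → G → ℕ) (τ : S → Finpartition (univ : Finset G)) (σ : B → S) (b : B) : ℚ :=
  (Fintype.card G : ℚ)⁻¹ *
    ∑ Gb ∈ (τ (σ b)).parts, max ((vsum v b Gb : ℚ) - (V2 v (buyersOf σ (σ b)) Gb : ℚ)) 0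

/-- Seller `s`'s utility in the multi-seller game. -/
def useller (v : B → G → ℕ) (τ : S → Finpartition (univ : Finset G)) (σ : B → S) (s : S) : ℚ :=
  (Fintype.card G : ℚ)⁻¹ * ∑ Gb ∈ (τ s).parts, (V2 v (buyersOf σ s) Gb : ℚ)

/-- Social welfare in the multi-seller game. -/
def SWm (v : B → G → ℕ) (τ : S → Finpartition (univ : Finset G)) (σ : B → S) : ℚ :=
  ((Fintype.card S : ℚ) * (Fintype.card G : ℚ))⁻¹ *
    ∑ s : S, ∑ Gb ∈ (τ s).parts, (V1 v (buyersOf σ s) Gb : ℚ)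

/-- Social welfare in the single-seller (monopoly) game. -/
def SW1 (v : B → G → ℕ) (π : Finpartition (univ : Finset G)) : ℚ :=
  (Fintype.card G : ℚ)⁻¹ * ∑ Gb ∈ π.parts, (V1 v (univ : Finset B) Gb : ℚ)

/-- The monopolist's revenue. -/
def rev1 (v : B → G → ℕ) (π : Finpartition (univ : Finset G)) : ℚ :=
  (Fintype.card G : ℚ)⁻¹ * ∑ Gb ∈ π.parts, (V2 v (univ : Finset B) Gb : ℚ)

/-- Buyer `b`'s utility in the monopoly game. -/
def ub1 (v : B → G → ℕ) (π : Finpartition (univ : Finset G)) (b : B) : ℚ :=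
  (Fintype.card G : ℚ)⁻¹ *
    ∑ Gb ∈ π.parts, max ((vsum v b Gb : ℚ) - (V2 v (univ : Finset B) Gb : ℚ)) 0

/-- `π` refines `π̂`: every block of `π̂` is a union of blocks of `π`. -/
def IsRefinement (π πhat : Finpartition (univ : Finset G)) : Prop :=
  ∀ t ∈ πhat.parts, ∃ P ⊆ π.parts, t = P.sup id

/-- `σ` is a (pure) Nash equilibrium of the buyers' subgame induced by `τ`. -/
def IsNash (v : B → G → ℕ) (τ : S → Finpartition (univ : Finset G)) (σ : B → S) : Prop :=
  ∀ (b : B) (s : S), ubuyer v τ (Function.update σ b s) b ≤ ubuyer v τ σ b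

/-- `p^i(G)`: the number of goods demanded by at least `i` buyers. -/
def pdem (v : B → G → ℕ) (i : ℕ) : ℕ :=
  (univ.filter (fun g : G => i ≤ ∑ b : B, v b g)).card

/-- The trivial (indiscrete) partition `{G}`, which discloses nothing. -/
def trivPart (G : Type*) [Fintype G] [DecidableEq G] [Nonempty G] :
    Finpartition (univ : Finset G) :=
  Finpartition.indiscrete Finset.univ_nonempty.ne_empty

/-- `(π, f)` is a pure subgame perfect equilibrium of the two-stage game. -/
def IsSPE (v : B → G → ℕ) (π : S → Finpartition (univ : Finset G))
    (f : (S → Finpartition (univ : Finset G)) → (B → S)) : Prop :=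
  (∀ τ, IsNash v τ (f τ)) ∧
  ∀ (s : S) (ρ : Finpartition (univ : Finset G)),
    useller v (Function.update π s ρ) (f (Function.update π s ρ)) s ≤ useller v π (f π) s

/-! Blockwise, removing `b'` lowers the top value only if `b'` is the unique top bidder; then the
top value was `v_{b'}(Ḡ)` and the second-largest is the top value of the others. Otherwise nothing
changes and `v_{b'}(Ḡ) ≤ V̄2(B,Ḡ)`, so `b'`'s utility on `Ḡ` is `0`. -/

namespace Finset

variable {ι α : Type*} [DecidableEq ι] {s : Finset ι} {f : ι → α} {b : ι}

theorem sup_eq_sup_sup_erase [SemilatticeSup α] [OrderBot α] (hb : b ∈ s) :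
    s.sup f = f b ⊔ (s.erase b).sup f := by
  rw [← sup_insert, insert_erase hb]

theorem le_inf'_sup_erase_of_le [Lattice α] [OrderBot α] (hs : s.Nonempty) (hb : b ∈ s)
    (h : f b ≤ (s.erase b).sup f) : f b ≤ s.inf' hs (fun c => (s.erase c).sup f) := by
  refine le_inf' _ _ fun c _ => ?_
  obtain rfl | hcb := eq_or_ne c b
  · exact h
  · exact le_sup (mem_erase.2 ⟨hcb.symm, hb⟩)

theorem inf'_sup_erase_eq_of_lt [LinearOrder α] [OrderBot α] (hs : s.Nonempty) (hb : b ∈ s)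
    (h : (s.erase b).sup f < f b) :
    s.inf' hs (fun c => (s.erase c).sup f) = (s.erase b).sup f := by
  refine le_antisymm (inf'_le _ hb) (le_inf' _ _ fun c _ => ?_)
  obtain rfl | hcb := eq_or_ne c b
  · exact le_rfl
  · exact h.le.trans (le_sup (mem_erase.2 ⟨hcb.symm, hb⟩))

-- The `inf'` is the second-largest value of `f` on `s` (Clarke pivot identity).
theorem sup_sub_sup_erase_eq_max (f : ι → ℕ) (hs : s.Nonempty) (hb : b ∈ s) :
    ((s.sup f : ℕ) : ℤ) - ((s.erase b).sup f : ℕ) =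
      max ((f b : ℤ) - (s.inf' hs (fun c => (s.erase c).sup f) : ℕ)) 0 := by
  rw [sup_eq_sup_sup_erase hb]
  rcases le_or_gt (f b) ((s.erase b).sup f) with h | h
  · have hle := le_inf'_sup_erase_of_le hs hb h
    rw [sup_of_le_right h]
    omega
  · rw [sup_of_le_left h.le, inf'_sup_erase_eq_of_lt hs hb h]
    omega

end Finset

omit [Fintype B] [Fintype G] [DecidableEq G] in
theorem V1_sub_V1_erase (v : B → G → ℕ) {Bb : Finset B} {b' : B} (hb : b' ∈ Bb) (Gb : Finset G) :
    (V1 v Bb Gb : ℤ) - (V1 v (Bb.erase b') Gb : ℤ) =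
      max ((vsum v b' Gb : ℤ) - (V2 v Bb Gb : ℤ)) 0 := by
  rw [V2, dif_pos ⟨b', hb⟩]
  exact sup_sub_sup_erase_eq_max _ _ hb

theorem welfare_drop_eq_buyer_utility_general
    (v : B → G → ℕ)
    (π : Finpartition (univ : Finset G)) (b' : B) :
    (∑ Gb ∈ π.parts, (V1 v (univ : Finset B) Gb : ℤ)) -
      (∑ Gb ∈ π.parts, (V1 v ((univ : Finset B).erase b') Gb : ℤ)) =
      ∑ Gb ∈ π.parts, max ((vsum v b' Gb : ℤ) - (V2 v (univ : Finset B) Gb : ℤ)) 0 := by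
  rw [← sum_sub_distrib]
  exact sum_congr rfl fun Gb _ => V1_sub_V1_erase v (mem_univ b') Gb

/-- removing a buyer decreases the (unnormalized) welfare by
exactly that buyer's utility. -/
theorem welfare_drop_eq_buyer_utility [Nonempty B] [Nonempty G]
    (v : B → G → ℕ) (hv : ∀ b g, v b g ≤ 1)
    (π : Finpartition (univ : Finset G)) (b' : B) :
    (∑ Gb ∈ π.parts, (V1 v (univ : Finset B) Gb : ℤ)) -
      (∑ Gb ∈ π.parts, (V1 v ((univ : Finset B).erase b') Gb : ℤ)) =
      ∑ Gb ∈ π.parts, max ((vsum v b' Gb : ℤ) - (V2 v (univ : Finset B) Gb : ℤ)) 0 :=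
  welfare_drop_eq_buyer_utility_general v π b'
end

section
/- For every seller profile τ there exists a buyer assignment σ : B → S that is a Nash equilibrium for τ; that is, the buyers' subgame always has a pure Nash equilibrium. -/
open Finset

variable {B G S : Type*} [Fintype B] [Fintype G] [Fintype S]
variable [DecidableEq B] [DecidableEq G] [DecidableEq S]

/-! In each block a buyer pays the second-highest bid, so his surplus there is exactly his
marginal contribution to the block's highest value. Hence a buyer's utility is his marginal
contribution to the total welfare `∑ s, ∑ Ḡ ∈ τ s, V̄1(B_s(σ), Ḡ)`, the welfare is an exact
potential of the buyers' game, and an assignment maximizing it is a Nash equilibrium. -/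

section MarginalContribution

omit [Fintype B] [Fintype G] [DecidableEq G]

variable (v : B → G → ℕ) {Bb : Finset B} (Gb : Finset G) {b : B}

lemma V1_eq_vsum_sup_V1_erase (hb : b ∈ Bb) :
    V1 v Bb Gb = vsum v b Gb ⊔ V1 v (Bb.erase b) Gb := by
  conv_lhs => rw [V1, ← Finset.insert_erase hb, Finset.sup_insert]
  rfl

lemma vsum_le_V1_erase {b' : B} (hb : b ∈ Bb) (hne : b ≠ b') :
    vsum v b Gb ≤ V1 v (Bb.erase b') Gb :=
  Finset.le_sup (f := fun b => vsum v b Gb) (Finset.mem_erase.mpr ⟨hne, hb⟩)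

lemma vsum_le_V2_of_le_V1_erase (hb : b ∈ Bb) (h : vsum v b Gb ≤ V1 v (Bb.erase b) Gb) :
    vsum v b Gb ≤ V2 v Bb Gb := by
  rw [V2, dif_pos ⟨b, hb⟩]
  refine Finset.le_inf' _ _ fun b' _ => ?_
  obtain rfl | hne := eq_or_ne b b'
  · exact h
  · exact vsum_le_V1_erase v Gb hb hne

lemma V2_eq_V1_erase_of_V1_erase_le (hb : b ∈ Bb) (h : V1 v (Bb.erase b) Gb ≤ vsum v b Gb) :
    V2 v Bb Gb = V1 v (Bb.erase b) Gb := by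
  rw [V2, dif_pos ⟨b, hb⟩]
  refine le_antisymm (Finset.inf'_le _ hb) (Finset.le_inf' _ _ fun b' _ => ?_)
  obtain rfl | hne := eq_or_ne b b'
  · exact le_rfl
  · exact h.trans (vsum_le_V1_erase v Gb hb hne)

theorem max_vsum_sub_V2_eq_V1_sub_V1_erase (hb : b ∈ Bb) :
    max ((vsum v b Gb : ℚ) - V2 v Bb Gb) 0 = (V1 v Bb Gb : ℚ) - V1 v (Bb.erase b) Gb := by
  rw [V1_eq_vsum_sup_V1_erase v Gb hb]
  rcases le_total (vsum v b Gb) (V1 v (Bb.erase b) Gb) with h | h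
  · have hV2 : (vsum v b Gb : ℚ) ≤ V2 v Bb Gb := by
      exact_mod_cast vsum_le_V2_of_le_V1_erase v Gb hb h
    rw [sup_eq_right.mpr h, sub_self, max_eq_right (by linarith)]
  · rw [sup_eq_left.mpr h, V2_eq_V1_erase_of_V1_erase_le v Gb hb h,
      max_eq_left (sub_nonneg.mpr (by exact_mod_cast h))]

end MarginalContribution

section Potential

variable (v : B → G → ℕ) (τ : S → Finpartition (univ : Finset G))

/-- The social welfare `SWm` without its normalizing factor. -/
def welfare (σ : B → S) : ℚ :=
  ∑ s, ∑ Gb ∈ (τ s).parts, (V1 v (buyersOf σ s) Gb : ℚ)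

def welfareWithout (σ : B → S) (b : B) : ℚ :=
  ∑ s, ∑ Gb ∈ (τ s).parts, (V1 v ((buyersOf σ s).erase b) Gb : ℚ)

omit [Fintype S] [DecidableEq B] in
lemma mem_buyersOf_self (σ : B → S) (b : B) : b ∈ buyersOf σ (σ b) := by
  simp [buyersOf]

omit [Fintype S] in
lemma erase_buyersOf_of_ne {σ : B → S} {b : B} {s : S} (hs : σ b ≠ s) :
    (buyersOf σ s).erase b = buyersOf σ s :=
  Finset.erase_eq_of_notMem fun hb => hs (Finset.mem_filter.mp hb).2

omit [Fintype S] in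
lemma erase_buyersOf_update (σ : B → S) (b : B) (s s' : S) :
    (buyersOf (Function.update σ b s) s').erase b = (buyersOf σ s').erase b := by
  ext b'
  by_cases hb' : b' = b <;> simp [buyersOf, Function.update, hb']

theorem ubuyer_eq_welfare_sub_welfareWithout (σ : B → S) (b : B) :
    ubuyer v τ σ b = (Fintype.card G : ℚ)⁻¹ * (welfare v τ σ - welfareWithout v τ σ b) := by
  have hothers : ∀ s ∈ univ, s ≠ σ b → ∑ Gb ∈ (τ s).parts, (V1 v (buyersOf σ s) Gb : ℚ) -
      ∑ Gb ∈ (τ s).parts, (V1 v ((buyersOf σ s).erase b) Gb : ℚ) = 0 := fun s _ hs => by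
    rw [erase_buyersOf_of_ne hs.symm, sub_self]
  rw [ubuyer, welfare, welfareWithout, ← Finset.sum_sub_distrib,
    Finset.sum_eq_single_of_mem (σ b) (Finset.mem_univ _) hothers, ← Finset.sum_sub_distrib]
  simp only [max_vsum_sub_V2_eq_V1_sub_V1_erase v _ (mem_buyersOf_self σ b)]

lemma welfareWithout_update (σ : B → S) (b : B) (s : S) :
    welfareWithout v τ (Function.update σ b s) b = welfareWithout v τ σ b := by
  simp only [welfareWithout, erase_buyersOf_update]

theorem isNash_of_welfare_max {σ : B → S} (hσ : ∀ σ', welfare v τ σ' ≤ welfare v τ σ) :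
    IsNash v τ σ := fun b s => by
  rw [ubuyer_eq_welfare_sub_welfareWithout, ubuyer_eq_welfare_sub_welfareWithout,
    welfareWithout_update]
  gcongr
  exact hσ _

end Potential

theorem exists_pure_nash_general [Nonempty S]
    (v : B → G → ℕ)
    (τ : S → Finpartition (univ : Finset G)) :
    ∃ σ : B → S, IsNash v τ σ :=
  let ⟨σ, hσ⟩ := Finite.exists_max (welfare v τ)
  ⟨σ, isNash_of_welfare_max v τ hσ⟩

/-- the buyers' subgame always has a pure Nash equilibrium. -/
theorem exists_pure_nash [Nonempty B] [Nonempty G] [Nonempty S]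
    (v : B → G → ℕ) (hv : ∀ b g, v b g ≤ 1)
    (τ : S → Finpartition (univ : Finset G)) :
    ∃ σ : B → S, IsNash v τ σ :=
  exists_pure_nash_general v τ
end

section
/- In the monopoly setting with exactly two buyers B = {a,b}, if a partition π of G refines a partition π̂ of G, then u_a(π) ≥ u_a(π̂), u_b(π) ≥ u_b(π̂), and u_s(π) ≤ u_s(π̂); that is, refining the partition weakly increases each buyer's utility and weakly decreases the seller's revenue. -/
open Finset

variable {B G S : Type*} [Fintype B] [Fintype G] [Fintype S]
variable [DecidableEq B] [DecidableEq G] [DecidableEq S]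

/-!
With two buyers the second price of a bundle is `min (v_a Ḡ) (v_b Ḡ)`, a minimum of two additive
set functions, hence superadditive: splitting a bundle can only lower the total of the second
prices, so refining lowers revenue. Since neither buyer's value falls below the second price,
buyer `b`'s utility is `v_b(G) / |G|` minus the revenue, and so it rises.
-/

namespace Finpartition

variable {α M : Type*} [AddCommMonoid M] {f : α → M}

lemma sum_inf_parts_of_le [Lattice α] [OrderBot α] {a : α} {P Q : Finpartition a} (h : P ≤ Q)
    (hf : f ⊥ = 0) {p : α} (hp : p ∈ P.parts) :
    ∑ q ∈ Q.parts, f (p ⊓ q) = f p := by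
  obtain ⟨q₀, hq₀, hpq₀⟩ := h hp
  rw [Finset.sum_eq_single_of_mem q₀ hq₀, inf_eq_left.2 hpq₀]
  intro q hq hne
  have hpq : Disjoint p q := (Q.disjoint hq₀ hq hne.symm).mono_left hpq₀
  rw [hpq.eq_bot, hf]

lemma sum_parts_le_of_le [DistribLattice α] [OrderBot α] [DecidableEq α] [PartialOrder M]
    [IsOrderedAddMonoid M] {a : α} {P Q : Finpartition a} (h : P ≤ Q) (hf : f ⊥ = 0)
    (hsup : ∀ (b : α) (R : Finpartition b), ∑ r ∈ R.parts, f r ≤ f b) :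
    ∑ p ∈ P.parts, f p ≤ ∑ q ∈ Q.parts, f q :=
  calc ∑ p ∈ P.parts, f p
      = ∑ p ∈ P.parts, ∑ q ∈ Q.parts, f (p ⊓ q) :=
        Finset.sum_congr rfl fun _ hp => (sum_inf_parts_of_le h hf hp).symm
    _ = ∑ q ∈ Q.parts, ∑ p ∈ P.parts, f (p ⊓ q) := Finset.sum_comm
    _ ≤ ∑ q ∈ Q.parts, f q := Finset.sum_le_sum fun q hq =>
        (P.sum_restrict (Q.le hq) f hf).symm.trans_le (hsup q _)

end Finpartition

omit [Fintype B] [DecidableEq B] in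
lemma IsRefinement.le {π πhat : Finpartition (univ : Finset G)} (h : IsRefinement π πhat) :
    π ≤ πhat := by
  intro s hs
  obtain ⟨g, hg⟩ := π.nonempty_of_mem_parts hs
  obtain ⟨t, ht, hgt⟩ := πhat.exists_mem (mem_univ g)
  obtain ⟨P, hP, rfl⟩ := h t ht
  obtain ⟨s', hs', hgs'⟩ := mem_sup.1 hgt
  rw [π.eq_of_mem_parts hs (hP hs') hg hgs']
  exact ⟨_, ht, le_sup (f := id) hs'⟩

section Valuations

variable (v : B → G → ℕ)

omit [Fintype B] [Fintype G] [DecidableEq B] in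
lemma sum_vsum_parts (b : B) {s : Finset G} (P : Finpartition s) :
    ∑ p ∈ P.parts, vsum v b p = vsum v b s := by
  conv_rhs => rw [vsum, ← P.biUnion_parts, sum_biUnion P.disjoint]
  rfl

omit [Fintype B] [Fintype G] [DecidableEq B] in
lemma sum_min_vsum_parts_le (x y : B) {s : Finset G} (P : Finpartition s) :
    ∑ p ∈ P.parts, min (vsum v x p) (vsum v y p) ≤ min (vsum v x s) (vsum v y s) :=
  le_min ((sum_le_sum fun _ _ => min_le_left _ _).trans_eq (sum_vsum_parts v x P))
    ((sum_le_sum fun _ _ => min_le_right _ _).trans_eq (sum_vsum_parts v y P))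

omit [Fintype B] [Fintype G] [DecidableEq G] in
lemma V2_empty (Bb : Finset B) : V2 v Bb ∅ = 0 := by
  unfold V2
  split_ifs with h
  · exact Nat.le_zero.1 ((inf'_le _ h.choose_spec).trans (sup_bot _).le)
  · rfl

omit [Fintype B] [Fintype G] [DecidableEq G] in
lemma V2_pair {x y : B} (hxy : x ≠ y) (s : Finset G) :
    V2 v {x, y} s = min (vsum v x s) (vsum v y s) := by
  have hx : ({x, y} : Finset B).erase x = {y} := erase_insert (by simpa using hxy)
  have hy : ({x, y} : Finset B).erase y = {x} := by
    rw [pair_comm, erase_insert (by simpa using hxy.symm)]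
  simp [V2, V1, hx, hy, min_comm]

lemma rev1_le_of_le {π πhat : Finpartition (univ : Finset G)} (h : π ≤ πhat)
    (hsup : ∀ (s : Finset G) (P : Finpartition s),
      ∑ p ∈ P.parts, V2 v univ p ≤ V2 v univ s) :
    rev1 v π ≤ rev1 v πhat := by
  unfold rev1
  refine mul_le_mul_of_nonneg_left ?_ (by positivity)
  exact_mod_cast Finpartition.sum_parts_le_of_le h (V2_empty v univ) hsup

lemma ub1_eq_sub_rev1 (π : Finpartition (univ : Finset G)) {b : B}
    (hb : ∀ s, V2 v univ s ≤ vsum v b s) :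
    ub1 v π b = (Fintype.card G : ℚ)⁻¹ * vsum v b univ - rev1 v π := by
  have hmax : ∀ s, max ((vsum v b s : ℚ) - V2 v univ s) 0 = vsum v b s - V2 v univ s :=
    fun s => max_eq_left (sub_nonneg.2 (by exact_mod_cast hb s))
  have htotal : ∑ p ∈ π.parts, (vsum v b p : ℚ) = vsum v b univ := by
    exact_mod_cast sum_vsum_parts v b π
  simp only [ub1, rev1, hmax, sum_sub_distrib, htotal, mul_sub]

end Valuations

theorem two_buyers_refinement_general
    (v : B → G → ℕ)
    (hB : Fintype.card B = 2)
    (π πhat : Finpartition (univ : Finset G)) (h : IsRefinement π πhat) :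
    (∀ b : B, ub1 v πhat b ≤ ub1 v π b) ∧ rev1 v π ≤ rev1 v πhat := by
  obtain ⟨x, y, hxy, hxy_univ⟩ := card_eq_two.1 (card_univ.trans hB)
  have hV2 : ∀ s, V2 v univ s = min (vsum v x s) (vsum v y s) := by
    rw [hxy_univ]
    exact V2_pair v hxy
  have hrev : rev1 v π ≤ rev1 v πhat :=
    rev1_le_of_le v h.le fun s P => by simpa only [hV2] using sum_min_vsum_parts_le v x y P
  refine ⟨fun b => ?_, hrev⟩
  have hb : ∀ s, V2 v univ s ≤ vsum v b s := by
    obtain rfl | rfl : b = x ∨ b = y := by simpa [hxy_univ] using mem_univ b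
    · exact fun s => (hV2 s).trans_le (min_le_left _ _)
    · exact fun s => (hV2 s).trans_le (min_le_right _ _)
  rw [ub1_eq_sub_rev1 v πhat hb, ub1_eq_sub_rev1 v π hb]
  linarith

/-- with two buyers, refining weakly increases each buyer's
utility and weakly decreases the seller's revenue. -/
theorem two_buyers_refinement [Nonempty G]
    (v : B → G → ℕ) (hv : ∀ b g, v b g ≤ 1)
    (hB : Fintype.card B = 2)
    (π πhat : Finpartition (univ : Finset G)) (h : IsRefinement π πhat) :
    (∀ b : B, ub1 v πhat b ≤ ub1 v π b) ∧ rev1 v π ≤ rev1 v πhat :=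
  two_buyers_refinement_general v hB π πhat h
end

section
/- In the monopoly setting, every revenue-maximizing partition π satisfies SW(π) ≥ (1/3)·OPT, where OPT := max_{π'} SW(π') over all partitions π' of G. -/
open Finset

variable {B G S : Type*} [Fintype B] [Fintype G] [Fintype S]
variable [DecidableEq B] [DecidableEq G] [DecidableEq S]

/-! Let `p` be the number of goods that some buyer values. With binary values every block `Ḡ`
has `V̄1(B, Ḡ) ≤ |Ḡ ∩ demanded|`, so `|G| · OPT ≤ p`. A block `{g₁, g₂}` with `g₁, g₂` valued by
two different buyers has second price at least one; peeling such blocks off until the remaining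
demand comes from a single buyer gives a partition `P` with `p ≤ 2 |G| u_s(P) + V̄1(B, G)`.
A revenue maximizer `π` has `SW(π) ≥ u_s(π) ≥ u_s(P)` and, by subadditivity of `V̄1`,
`|G| · SW(π) ≥ V̄1(B, G)`; hence `3 SW(π) ≥ OPT`. -/

theorem Finpartition.sum_sum_parts {α M : Type*} [DecidableEq α] [AddCommMonoid M]
    {s : Finset α} (P : Finpartition s) (f : α → M) :
    ∑ t ∈ P.parts, ∑ x ∈ t, f x = ∑ x ∈ s, f x := by
  conv_rhs => rw [← P.biUnion_parts]
  exact (sum_biUnion P.supIndep.pairwiseDisjoint).symm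

section Monopoly

variable {B G : Type*} {v : B → G → ℕ}

def demanded [Fintype B] (v : B → G → ℕ) (s : Finset G) : Finset G :=
  {g ∈ s | ∃ b, v b g ≠ 0}

theorem vsum_mono {b : B} {s t : Finset G} (h : s ⊆ t) : vsum v b s ≤ vsum v b t :=
  sum_le_sum_of_subset h

theorem card_le_vsum {b : B} {s : Finset G} (h : ∀ g ∈ s, v b g ≠ 0) : #s ≤ vsum v b s := by
  rw [card_eq_sum_ones]
  exact sum_le_sum fun g hg => Nat.one_le_iff_ne_zero.2 (h g hg)

theorem vsum_le_V1 {b : B} {Bb : Finset B} (hb : b ∈ Bb) (Gb : Finset G) :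
    vsum v b Gb ≤ V1 v Bb Gb :=
  le_sup (f := fun b => vsum v b Gb) hb

theorem V1_mono {Bb : Finset B} {s t : Finset G} (h : s ⊆ t) : V1 v Bb s ≤ V1 v Bb t :=
  sup_mono_fun fun _ _ => vsum_mono h

theorem V1_le_sum_parts [DecidableEq G] {Bb : Finset B} {s : Finset G} (P : Finpartition s) :
    V1 v Bb s ≤ ∑ t ∈ P.parts, V1 v Bb t := by
  refine Finset.sup_le fun b hb => ?_
  rw [vsum, ← P.sum_sum_parts]
  exact sum_le_sum fun t _ => vsum_le_V1 hb t

theorem V1_le_card_demanded [Fintype B] (hv : ∀ b g, v b g ≤ 1) (Bb : Finset B)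
    (Gb : Finset G) : V1 v Bb Gb ≤ #(demanded v Gb) := by
  refine Finset.sup_le fun b _ => ?_
  rw [demanded, card_filter]
  refine sum_le_sum fun g _ => ?_
  split_ifs with h
  · exact hv b g
  · exact Nat.le_zero.2 (by_contra fun hb => h ⟨b, hb⟩)

theorem card_demanded_eq_sum_parts [Fintype B] [DecidableEq G] {s : Finset G}
    (P : Finpartition s) : #(demanded v s) = ∑ t ∈ P.parts, #(demanded v t) := by
  simp only [demanded, card_filter, P.sum_sum_parts]

theorem V2_le_V1 [DecidableEq B] (Bb : Finset B) (Gb : Finset G) : V2 v Bb Gb ≤ V1 v Bb Gb := by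
  unfold V2
  split_ifs with h
  · obtain ⟨b, hb⟩ := h
    exact (inf'_le _ hb).trans (sup_mono (erase_subset _ _))
  · exact Nat.zero_le _

theorem min_vsum_le_V2 [DecidableEq B] {b₁ b₂ : B} {Bb : Finset B} (hb₁ : b₁ ∈ Bb)
    (hb₂ : b₂ ∈ Bb) (hne : b₁ ≠ b₂) (Gb : Finset G) :
    min (vsum v b₁ Gb) (vsum v b₂ Gb) ≤ V2 v Bb Gb := by
  rw [V2, dif_pos ⟨b₁, hb₁⟩]
  refine le_inf' _ _ fun b _ => ?_
  by_cases hb : b = b₁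
  · subst hb
    exact (min_le_right _ _).trans (vsum_le_V1 (mem_erase.2 ⟨hne.symm, hb₂⟩) Gb)
  · exact (min_le_left _ _).trans (vsum_le_V1 (mem_erase.2 ⟨Ne.symm hb, hb₁⟩) Gb)

theorem one_le_V2_pair [Fintype B] [DecidableEq B] [DecidableEq G] {b₁ b₂ : B} {g₁ g₂ : G}
    (hne : b₁ ≠ b₂) (h₁ : v b₁ g₁ ≠ 0) (h₂ : v b₂ g₂ ≠ 0) : 1 ≤ V2 v univ {g₁, g₂} := by
  refine le_trans (le_min ?_ ?_) (min_vsum_le_V2 (mem_univ b₁) (mem_univ b₂) hne _)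
  · exact (Nat.one_le_iff_ne_zero.2 h₁).trans
      (single_le_sum (f := v b₁) (fun _ _ => Nat.zero_le _) (mem_insert_self _ _))
  · exact (Nat.one_le_iff_ne_zero.2 h₂).trans
      (single_le_sum (f := v b₂) (fun _ _ => Nat.zero_le _) (by simp))

theorem card_demanded_le_V1_of_eq [Fintype B] {s : Finset G}
    (h : ∀ b₁ b₂, ∀ g₁ ∈ s, ∀ g₂ ∈ s, v b₁ g₁ ≠ 0 → v b₂ g₂ ≠ 0 → b₁ = b₂) :
    #(demanded v s) ≤ V1 v univ s := by
  obtain ⟨g₁, hg₁⟩ | hempty := (demanded v s).eq_empty_or_nonempty.symm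
  · obtain ⟨hg₁s, b₁, h₁⟩ := mem_filter.1 hg₁
    have hb₁ : ∀ g ∈ demanded v s, v b₁ g ≠ 0 := fun g hg => by
      obtain ⟨hgs, b₂, h₂⟩ := mem_filter.1 hg
      exact h b₁ b₂ g₁ hg₁s g hgs h₁ h₂ ▸ h₂
    calc #(demanded v s) ≤ vsum v b₁ (demanded v s) := card_le_vsum hb₁
      _ ≤ vsum v b₁ s := vsum_mono (filter_subset _ s)
      _ ≤ V1 v univ s := vsum_le_V1 (mem_univ b₁) s
  · simp [hempty]

theorem exists_card_demanded_le [Fintype B] [DecidableEq B] [DecidableEq G] (v : B → G → ℕ)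
    (s : Finset G) :
    ∃ P : Finpartition s, #(demanded v s) ≤ 2 * ∑ t ∈ P.parts, V2 v univ t + V1 v univ s := by
  induction s using Finset.strongInduction with
  | H s ih =>
  by_cases hone : ∀ b₁ b₂, ∀ g₁ ∈ s, ∀ g₂ ∈ s, v b₁ g₁ ≠ 0 → v b₂ g₂ ≠ 0 → b₁ = b₂
  · exact ⟨⊥, (card_demanded_le_V1_of_eq hone).trans (Nat.le_add_left _ _)⟩
  push Not at hone
  obtain ⟨b₁, b₂, g₁, hg₁, g₂, hg₂, h₁, h₂, hne⟩ := hone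
  set T : Finset G := {g₁, g₂}
  have hTs : T ⊆ s := insert_subset hg₁ (singleton_subset_iff.2 hg₂)
  obtain ⟨P, hP⟩ := ih (s \ T) (sdiff_ssubset hTs (insert_nonempty _ _))
  have hTP : T ∉ P.parts := fun h =>
    (mem_sdiff.1 (P.le h (mem_insert_self g₁ {g₂}))).2 (mem_insert_self g₁ {g₂})
  have hcard : #(demanded v s) ≤ #(demanded v (s \ T)) + 2 := by
    have hsub : demanded v s ⊆ demanded v (s \ T) ∪ T := by
      intro g
      simp only [demanded, mem_filter, mem_union, mem_sdiff]
      tauto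
    exact (card_le_card hsub).trans ((card_union_le _ _).trans (by grind [card_le_two]))
  refine ⟨P.extend (insert_nonempty _ _).ne_empty disjoint_sdiff_self_left
    (sdiff_union_of_subset hTs), ?_⟩
  rw [Finpartition.extend_parts, sum_insert hTP]
  have hV2 : 1 ≤ V2 v univ T := one_le_V2_pair hne h₁ h₂
  have := V1_mono (v := v) (Bb := univ) (sdiff_subset (s := s) (t := T))
  omega

variable [Fintype B] [Fintype G] [DecidableEq G]

theorem rev1_le_SW1 [DecidableEq B] (π : Finpartition (univ : Finset G)) :
    rev1 v π ≤ SW1 v π := by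
  unfold rev1 SW1
  gcongr with t
  exact_mod_cast V2_le_V1 (v := v) univ t

theorem V1_univ_le_SW1 (π : Finpartition (univ : Finset G)) :
    (Fintype.card G : ℚ)⁻¹ * V1 v univ univ ≤ SW1 v π := by
  unfold SW1
  gcongr
  exact_mod_cast V1_le_sum_parts (v := v) (Bb := univ) π

theorem SW1_le_card_demanded (hv : ∀ b g, v b g ≤ 1) (π : Finpartition (univ : Finset G)) :
    SW1 v π ≤ (Fintype.card G : ℚ)⁻¹ * #(demanded v univ) := by
  unfold SW1
  gcongr
  rw [card_demanded_eq_sum_parts π]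
  push_cast
  exact sum_le_sum fun t _ => by exact_mod_cast V1_le_card_demanded hv univ t

theorem exists_card_demanded_le_rev1 [DecidableEq B] (v : B → G → ℕ) :
    ∃ P : Finpartition (univ : Finset G),
      (Fintype.card G : ℚ)⁻¹ * #(demanded v univ) ≤
        2 * rev1 v P + (Fintype.card G : ℚ)⁻¹ * V1 v univ univ := by
  obtain ⟨P, h⟩ := exists_card_demanded_le v (univ : Finset G)
  refine ⟨P, ?_⟩
  have hq : (#(demanded v univ) : ℚ) ≤ 2 * ∑ t ∈ P.parts, (V2 v univ t : ℚ) + V1 v univ univ := by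
    exact_mod_cast h
  have hG : (0 : ℚ) ≤ (Fintype.card G : ℚ)⁻¹ := by positivity
  unfold rev1
  nlinarith

end Monopoly

theorem revmax_sw_ge_third_opt_general
    (v : B → G → ℕ) (hv : ∀ b g, v b g ≤ 1)
    (π : Finpartition (univ : Finset G))
    (hmax : ∀ π' : Finpartition (univ : Finset G), rev1 v π' ≤ rev1 v π)
    (π' : Finpartition (univ : Finset G)) :
    (1 / 3 : ℚ) * SW1 v π' ≤ SW1 v π := by
  obtain ⟨P, hP⟩ := exists_card_demanded_le_rev1 v
  have hopt := SW1_le_card_demanded hv π'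
  have hrev := (hmax P).trans (rev1_le_SW1 π)
  have hbundle := V1_univ_le_SW1 (v := v) π
  linarith

/-- every revenue-maximizing partition attains at least a third
of the optimal social welfare. -/
theorem revmax_sw_ge_third_opt [Nonempty B] [Nonempty G]
    (v : B → G → ℕ) (hv : ∀ b g, v b g ≤ 1)
    (π : Finpartition (univ : Finset G))
    (hmax : ∀ π' : Finpartition (univ : Finset G), rev1 v π' ≤ rev1 v π)
    (π' : Finpartition (univ : Finset G)) :
    (1 / 3 : ℚ) * SW1 v π' ≤ SW1 v π :=
  revmax_sw_ge_third_opt_general v hv π hmax π'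
end

section
/- The one-third bound for a revenue-maximizing monopolist is tight: for B = G = {1,2,3} with v(b,g) = 1 if b = g and v(b,g) = 0 otherwise, the trivial partition {G} is revenue-maximizing, SW({G}) = 1/3, and max_{π'} SW(π') = 1. -/
open Finset

variable {B G S : Type*} [Fintype B] [Fintype G] [Fintype S]
variable [DecidableEq B] [DecidableEq G] [DecidableEq S]

/-- The identity-like valuation matrix on three buyers and three goods. -/
def vDiag3 : Fin 3 → Fin 3 → ℕ := fun b g => if b = g then 1 else 0

/-!
For the diagonal valuation a block earns the second price `1` exactly when it contains at least
two goods, and a partition of three goods has at most one such block; so the grand bundle is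
revenue-maximizing, while its welfare is only `max_b v_b(G) / 3 = 1/3`. With binary valuations a
block is worth at most its size to the top bidder, so welfare never exceeds `1`, and the discrete
partition attains it by selling each good to its unique admirer.
-/

lemma Finpartition.two_mul_card_filter_two_le_card {α : Type*} [DecidableEq α] {s : Finset α}
    (P : Finpartition s) : 2 * #{p ∈ P.parts | 2 ≤ #p} ≤ #s :=
  calc 2 * #{p ∈ P.parts | 2 ≤ #p}
      = ∑ p ∈ P.parts with 2 ≤ #p, 2 := by rw [sum_const, smul_eq_mul, mul_comm]
    _ ≤ ∑ p ∈ P.parts with 2 ≤ #p, #p := sum_le_sum fun p hp => (mem_filter.1 hp).2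
    _ ≤ ∑ p ∈ P.parts, #p := sum_le_sum_of_subset (filter_subset _ _)
    _ = #s := P.sum_card_parts

lemma V1_le_card {β γ : Type*} {v : β → γ → ℕ} (hv : ∀ b g, v b g ≤ 1)
    (Bb : Finset β) (Gb : Finset γ) : V1 v Bb Gb ≤ #Gb :=
  Finset.sup_le fun b _ => by simpa [vsum] using sum_le_card_nsmul Gb (v b) 1 fun g _ => hv b g

section Monopoly

variable {β γ : Type*} [Fintype β] [Fintype γ] [DecidableEq γ]

lemma trivPart_parts [Nonempty γ] : (trivPart γ).parts = {univ} := rfl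

lemma SW1_le_one {v : β → γ → ℕ} (hv : ∀ b g, v b g ≤ 1) (π : Finpartition (univ : Finset γ)) :
    SW1 v π ≤ 1 := by
  have hsum : ∑ Gb ∈ π.parts, (V1 v univ Gb : ℚ) ≤ Fintype.card γ := by
    rw [← card_univ, ← π.sum_card_parts]
    exact_mod_cast sum_le_sum fun Gb _ => V1_le_card hv univ Gb
  rw [SW1]
  rcases (Fintype.card γ).eq_zero_or_pos with hγ | hγ
  · simp [hγ]
  · rw [inv_mul_le_iff₀ (by exact_mod_cast hγ), mul_one]
    exact hsum

lemma SW1_bot (v : β → γ → ℕ) :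
    SW1 v ⊥ = (Fintype.card γ : ℚ)⁻¹ * ∑ g, (V1 v univ {g} : ℚ) := by
  rw [SW1, Finpartition.parts_bot, sum_map]
  rfl

lemma SW1_trivPart [Nonempty γ] (v : β → γ → ℕ) :
    SW1 v (trivPart γ) = (Fintype.card γ : ℚ)⁻¹ * V1 v univ univ := by
  rw [SW1, trivPart_parts, sum_singleton]

lemma rev1_trivPart [DecidableEq β] [Nonempty γ] (v : β → γ → ℕ) :
    rev1 v (trivPart γ) = (Fintype.card γ : ℚ)⁻¹ * V2 v univ univ := by
  rw [rev1, trivPart_parts, sum_singleton]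

end Monopoly

lemma V2_vDiag3 (Gb : Finset (Fin 3)) : V2 vDiag3 univ Gb = if 2 ≤ #Gb then 1 else 0 := by
  revert Gb
  decide

lemma V1_vDiag3_singleton (g : Fin 3) : V1 vDiag3 univ {g} = 1 := by
  revert g
  decide

lemma rev1_vDiag3_le (π : Finpartition (univ : Finset (Fin 3))) : rev1 vDiag3 π ≤ 1 / 3 := by
  have hbig : #{p ∈ π.parts | 2 ≤ #p} ≤ 1 := by
    have := π.two_mul_card_filter_two_le_card
    rw [card_univ, Fintype.card_fin] at this
    omega
  have hsum : ∑ p ∈ π.parts, (V2 vDiag3 univ p : ℚ) ≤ 1 := by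
    simp only [V2_vDiag3, Nat.cast_ite, Nat.cast_one, Nat.cast_zero, sum_boole]
    exact_mod_cast hbig
  rw [rev1, Fintype.card_fin]
  linarith

/-- tightness of the one-third bound. -/
theorem third_bound_tight :
    (∀ π' : Finpartition (univ : Finset (Fin 3)),
        rev1 vDiag3 π' ≤ rev1 vDiag3 (trivPart (Fin 3))) ∧
    SW1 vDiag3 (trivPart (Fin 3)) = 1 / 3 ∧
    IsGreatest (Set.range (SW1 vDiag3)) 1 := by
  refine ⟨fun π' => ?_, ?_, ⟨⊥, ?_⟩, ?_⟩
  · rw [rev1_trivPart, V2_vDiag3]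
    simpa using rev1_vDiag3_le π'
  · rw [SW1_trivPart, (by decide : V1 vDiag3 univ univ = 1)]
    norm_num
  · simp [SW1_bot, V1_vDiag3_singleton]
  · rintro _ ⟨π, rfl⟩
    exact SW1_le_one (by decide) π
end

section
/- The one-half bound is tight: for B = G = {1,2} with v(b,g) = 1 if b = g and v(b,g) = 0 otherwise, every revenue-maximizing partition π satisfies SW(π) = 1/2, while max_{π'} SW(π') = 1. -/
open Finset

variable {B G S : Type*} [Fintype B] [Fintype G] [Fintype S]
variable [DecidableEq B] [DecidableEq G] [DecidableEq S]

/-- The identity-like valuation matrix on two buyers and two goods. -/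
def vDiag2 : Fin 2 → Fin 2 → ℕ := fun b g => if b = g then 1 else 0

/-! On two goods the only partitions are the bundle `{G}` and the discrete partition. Bundled,
both buyers value the bundle at 1, so the second price, hence revenue, equals the welfare 1/2.
Sold separately, each good interests a single buyer, so revenue drops to 0 while welfare rises
to 1. Hence the bundle is the unique revenue maximizer, and the discrete partition is the
welfare maximizer. -/

theorem Finpartition.eq_trivPart_or_eq_bot_fin_two (π : Finpartition (univ : Finset (Fin 2))) :
    π = trivPart (Fin 2) ∨ π = ⊥ := by
  revert π
  decide

theorem V1_vDiag2_univ : V1 vDiag2 univ univ = 1 := by decide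

theorem V2_vDiag2_univ : V2 vDiag2 univ univ = 1 := by decide

theorem V1_vDiag2_singleton (g : Fin 2) : V1 vDiag2 univ {g} = 1 := by
  revert g
  decide

theorem V2_vDiag2_singleton (g : Fin 2) : V2 vDiag2 univ {g} = 0 := by
  revert g
  decide

theorem rev1_vDiag2_trivPart : rev1 vDiag2 (trivPart (Fin 2)) = 1 / 2 := by
  simp [rev1, trivPart, V2_vDiag2_univ]

theorem SW1_vDiag2_trivPart : SW1 vDiag2 (trivPart (Fin 2)) = 1 / 2 := by
  simp [SW1, trivPart, V1_vDiag2_univ]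

theorem rev1_vDiag2_bot : rev1 vDiag2 ⊥ = 0 := by
  simp [rev1, V2_vDiag2_singleton]

theorem SW1_vDiag2_bot : SW1 vDiag2 ⊥ = 1 := by
  simp [SW1, V1_vDiag2_singleton]

/-- tightness of the one-half bound. -/
theorem half_bound_tight :
    (∀ π : Finpartition (univ : Finset (Fin 2)),
        (∀ π' : Finpartition (univ : Finset (Fin 2)), rev1 vDiag2 π' ≤ rev1 vDiag2 π) →
        SW1 vDiag2 π = 1 / 2) ∧
    IsGreatest (Set.range (SW1 vDiag2)) 1 := by
  refine ⟨fun π hmax => ?_, ⟨⊥, SW1_vDiag2_bot⟩, ?_⟩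
  · rcases π.eq_trivPart_or_eq_bot_fin_two with rfl | rfl
    · exact SW1_vDiag2_trivPart
    · have hbundle := hmax (trivPart (Fin 2))
      rw [rev1_vDiag2_bot, rev1_vDiag2_trivPart] at hbundle
      norm_num at hbundle
  · rintro _ ⟨π, rfl⟩
    rcases π.eq_trivPart_or_eq_bot_fin_two with rfl | rfl
    · rw [SW1_vDiag2_trivPart]
      norm_num
    · rw [SW1_vDiag2_bot]
end

section
/- In the monopoly setting, if π is a revenue-maximizing partition that additionally satisfies SW(π) ≥ SW(π') for every revenue-maximizing partition π', then SW(π) ≥ (p^1 + p^2)/(2·|G|). -/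
/-!
Since `π` maximizes the pair (revenue, welfare) lexicographically, splitting a good `g` off its
part `P` must not improve that pair. Let `b₁, b₂` be the top two bidders on `P`. A case analysis
on the demand `d(g)` (the number of buyers wanting `g`) shows that then
`min d(g) 2 ≤ v b₁ g + v b₂ g`; summing over `g ∈ P` gives
`∑_{g ∈ P} min d(g) 2 ≤ V̄1(P) + V̄2(P) ≤ 2 V̄1(P)`. Summing over the parts, and using
`p¹ + p² = ∑_g min d(g) 2`, yields `p¹ + p² ≤ 2 |G| SW(π)`. With a single buyer the bound holds
for every partition.
-/

open Finset

variable {B G S : Type*} [Fintype B] [Fintype G] [Fintype S]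
variable [DecidableEq B] [DecidableEq G] [DecidableEq S]

namespace Finpartition

variable {α : Type*} [Lattice α] [OrderBot α] [DecidableEq α]

lemma parts_top_of_ne_bot {a : α} (ha : a ≠ ⊥) : (⊤ : Finpartition a).parts = {a} := by
  show (dite _ _ _ : Finpartition a).parts = _
  rw [dif_neg ha]
  rfl

variable [IsModularLattice α] {a P : α}

def replacePart (π : Finpartition a) (P : α) (ρ : Finpartition P) : Finpartition a :=
  (combine (fun t => if h : P = t then ρ.copy h else ⊤) π.supIndep).copy π.sup_parts

lemma sum_replacePart_add {M : Type*} [AddCommMonoid M] (π : Finpartition a) (hP : P ∈ π.parts)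
    (ρ : Finpartition P) (f : α → M) :
    ∑ t ∈ (π.replacePart P ρ).parts, f t + f P = ∑ t ∈ ρ.parts, f t + ∑ t ∈ π.parts, f t := by
  have hrest : ∑ t ∈ π.parts.erase P, ∑ p ∈ (if h : P = t then ρ.copy h else ⊤).parts, f p
      = ∑ t ∈ π.parts.erase P, f t := by
    refine sum_congr rfl fun t ht => ?_
    rw [dif_neg (ne_of_mem_erase ht).symm,
      parts_top_of_ne_bot (π.ne_bot (mem_of_mem_erase ht)), sum_singleton]
  rw [replacePart, copy_parts, sum_combine, ← add_sum_erase _ _ hP, ← add_sum_erase _ f hP,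
    dif_pos rfl, copy_parts, hrest]
  abel

end Finpartition

namespace Finpartition

variable {α : Type*} [DecidableEq α] {s : Finset α} {x : α}

lemma sum_parts_sum {M : Type*} [AddCommMonoid M] (π : Finpartition s) (f : α → M) :
    ∑ t ∈ π.parts, ∑ x ∈ t, f x = ∑ x ∈ s, f x := by
  have h := sum_biUnion (f := f) π.disjoint
  rw [π.biUnion_parts] at h
  exact h.symm

/-- The partition `{{x}, s \ {x}}` of `s`, which is `{{x}}` when `s = {x}`. -/
def splitOff (hx : x ∈ s) : Finpartition s :=
  (ofPairwiseDisjoint {{x}, s.erase x} (by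
    rw [coe_pair]
    exact (Set.pairwiseDisjoint_singleton _ _).insert fun t ht _ => by
      rw [Set.mem_singleton_iff.1 ht]
      exact disjoint_singleton_left.2 (notMem_erase x s))).copy (by
    rw [sup_insert, sup_singleton, id, id, sup_eq_union, ← insert_eq, insert_erase hx])

lemma sum_splitOff {M : Type*} [AddCommMonoid M] (hx : x ∈ s) (f : Finset α → M) (hf : f ∅ = 0) :
    ∑ t ∈ (splitOff hx).parts, f t = f {x} + f (s.erase x) := by
  rw [splitOff, copy_parts, sum_ofPairwiseDisjoint_eq_sum _ hf, sum_pair]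
  exact fun h => notMem_erase x s (h ▸ mem_singleton_self x)

end Finpartition

section Valuations

variable {β γ : Type*} (v : β → γ → ℕ) {s : Finset β} (X : Finset γ)

@[simp] lemma vsum_singleton (b : β) (g : γ) : vsum v b {g} = v b g := sum_singleton _ _

lemma vsum_erase_add [DecidableEq γ] (b : β) {g : γ} {P : Finset γ} (hg : g ∈ P) :
    vsum v b (P.erase g) + v b g = vsum v b P :=
  sum_erase_add P _ hg

lemma vsum_le_V1_s13 {b : β} (hb : b ∈ s) : vsum v b X ≤ V1 v s X :=
  le_sup (f := fun b => vsum v b X) hb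

@[simp] lemma V1_empty : V1 v s ∅ = 0 := by simp [V1, vsum]

lemma one_le_V1_singleton {g : γ} (h : 1 ≤ ∑ b ∈ s, v b g) : 1 ≤ V1 v s {g} := by
  obtain ⟨b, hb, hbg⟩ := exists_ne_zero_of_sum_ne_zero (Nat.one_le_iff_ne_zero.1 h)
  have := vsum_le_V1_s13 v {g} hb
  rw [vsum_singleton] at this
  omega

lemma sum_min_two_le_V1_of_card_le_one (P : Finset γ) (hs : #s ≤ 1) :
    ∑ g ∈ P, min (∑ b ∈ s, v b g) 2 ≤ V1 v s P :=
  calc ∑ g ∈ P, min (∑ b ∈ s, v b g) 2 ≤ ∑ g ∈ P, ∑ b ∈ s, v b g :=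
        sum_le_sum fun g _ => min_le_left _ _
    _ = ∑ b ∈ s, vsum v b P := sum_comm
    _ ≤ #s • V1 v s P := sum_le_card_nsmul _ _ _ fun b hb => vsum_le_V1_s13 v P hb
    _ ≤ V1 v s P := by
        rw [smul_eq_mul]
        exact (Nat.mul_le_mul_right _ hs).trans_eq (one_mul _)

variable [DecidableEq β]

lemma V2_le_V1_s13 : V2 v s X ≤ V1 v s X := by
  rw [V2]
  split_ifs with hs
  · obtain ⟨b, hb⟩ := hs
    exact (inf'_le _ hb).trans (sup_mono (erase_subset b s))
  · exact Nat.zero_le _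

@[simp] lemma V2_empty_s13 : V2 v s ∅ = 0 := Nat.le_zero.1 ((V2_le_V1_s13 v ∅).trans_eq (V1_empty v))

lemma min_le_V2 {b c : β} (hb : b ∈ s) (hc : c ∈ s) (hbc : b ≠ c) :
    min (vsum v b X) (vsum v c X) ≤ V2 v s X := by
  rw [V2, dif_pos ⟨b, hb⟩]
  refine le_inf' _ _ fun d _ => ?_
  rcases eq_or_ne d b with rfl | hdb
  · exact (min_le_right _ _).trans (vsum_le_V1_s13 v X (mem_erase.2 ⟨hbc.symm, hc⟩))
  · exact (min_le_left _ _).trans (vsum_le_V1_s13 v X (mem_erase.2 ⟨hdb.symm, hb⟩))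

lemma V2_eq_V1_erase {b : β} (hb : b ∈ s) (htop : vsum v b X = V1 v s X) :
    V2 v s X = V1 v (s.erase b) X := by
  rw [V2, dif_pos ⟨b, hb⟩]
  refine le_antisymm (inf'_le _ hb) (le_inf' _ _ fun c hc => ?_)
  rcases eq_or_ne c b with rfl | hcb
  · exact le_rfl
  · exact Finset.sup_le fun d hd => (vsum_le_V1_s13 v X (mem_of_mem_erase hd)).trans
      (htop ▸ vsum_le_V1_s13 v X (mem_erase.2 ⟨hcb.symm, hb⟩))

lemma exists_vsum_eq_V1_and_vsum_eq_V2 (hs : 1 < #s) :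
    ∃ b₁ ∈ s, ∃ b₂ ∈ s, b₁ ≠ b₂ ∧ vsum v b₁ X = V1 v s X ∧ vsum v b₂ X = V2 v s X := by
  obtain ⟨b₁, hb₁, htop₁⟩ := exists_mem_eq_sup s (card_pos.1 (by omega)) fun b => vsum v b X
  have hne : (s.erase b₁).Nonempty := card_pos.1 (by rw [card_erase_of_mem hb₁]; omega)
  obtain ⟨b₂, hb₂, htop₂⟩ := exists_mem_eq_sup _ hne fun b => vsum v b X
  refine ⟨b₁, hb₁, b₂, mem_of_mem_erase hb₂, (ne_of_mem_erase hb₂).symm, htop₁.symm, ?_⟩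
  rw [V2_eq_V1_erase v X hb₁ htop₁.symm, V1, htop₂]

lemma one_le_V2_singleton {g : γ} (hv : ∀ b, v b g ≤ 1) (h : 2 ≤ ∑ b ∈ s, v b g) :
    1 ≤ V2 v s {g} := by
  obtain ⟨b, hb, hbg⟩ := exists_ne_zero_of_sum_ne_zero (s := s) (f := (v · g)) (by omega)
  have hrest : ∑ c ∈ s.erase b, v c g ≠ 0 := by
    have := add_sum_erase s (v · g) hb
    have := hv b
    omega
  obtain ⟨c, hc, hcg⟩ := exists_ne_zero_of_sum_ne_zero hrest
  have := min_le_V2 v {g} hb (mem_of_mem_erase hc) (ne_of_mem_erase hc).symm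
  simp only [vsum_singleton] at this
  omega

/-- `hrev` and `hsw` say that splitting `P` into `{g}` and `P \ {g}` does not increase
(revenue, welfare) lexicographically. As `V̄2(P) ≤ V̄2(P \ {g}) + max (v b₁ g) (v b₂ g)`, a good
whose demand is not covered by the top bidders `b₁, b₂` could be split off at no loss of revenue,
and then either welfare or revenue would strictly increase. -/
lemma min_sum_two_le_of_splitOff_unprofitable [DecidableEq γ] {g : γ} {P : Finset γ}
    (hv : ∀ b, v b g ≤ 1) (hg : g ∈ P) {b₁ b₂ : β} (hb₁ : b₁ ∈ s) (hb₂ : b₂ ∈ s) (hb : b₁ ≠ b₂)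
    (h₁ : vsum v b₁ P = V1 v s P) (h₂ : vsum v b₂ P = V2 v s P)
    (hrev : V2 v s {g} + V2 v s (P.erase g) ≤ V2 v s P)
    (hsw : V2 v s P ≤ V2 v s {g} + V2 v s (P.erase g) →
      V1 v s {g} + V1 v s (P.erase g) ≤ V1 v s P) :
    min (∑ b ∈ s, v b g) 2 ≤ v b₁ g + v b₂ g := by
  have e₁ := vsum_erase_add v b₁ hg
  have e₂ := vsum_erase_add v b₂ hg
  have := vsum_le_V1_s13 v (P.erase g) hb₁
  have := vsum_le_V1_s13 v (P.erase g) hb₂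
  have := min_le_V2 v (P.erase g) hb₁ hb₂ hb
  have := V2_le_V1_s13 v P (s := s)
  have := hv b₁
  have := hv b₂
  by_contra! hlt
  by_cases h2 : 2 ≤ ∑ b ∈ s, v b g
  · have := one_le_V1_singleton v (le_trans one_le_two h2)
    have := one_le_V2_singleton v hv h2
    omega
  · have := one_le_V1_singleton v (s := s) (g := g) (by omega)
    omega

end Valuations

section Monopoly

variable {β γ : Type*} [Fintype β] [Fintype γ] [DecidableEq γ] {v : β → γ → ℕ}
  {π : Finpartition (univ : Finset γ)} {P : Finset γ}

lemma SW1_replacePart_add (hP : P ∈ π.parts) (ρ : Finpartition P) :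
    SW1 v (π.replacePart P ρ) + (Fintype.card γ : ℚ)⁻¹ * V1 v univ P
      = (Fintype.card γ : ℚ)⁻¹ * ∑ t ∈ ρ.parts, (V1 v univ t : ℚ) + SW1 v π := by
  rw [SW1, SW1, ← mul_add, ← mul_add, π.sum_replacePart_add hP]

variable [DecidableEq β]

def IsRevMax (v : β → γ → ℕ) (π : Finpartition (univ : Finset γ)) : Prop :=
  ∀ π' : Finpartition (univ : Finset γ), rev1 v π' ≤ rev1 v π

lemma rev1_replacePart_add (hP : P ∈ π.parts) (ρ : Finpartition P) :
    rev1 v (π.replacePart P ρ) + (Fintype.card γ : ℚ)⁻¹ * V2 v univ P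
      = (Fintype.card γ : ℚ)⁻¹ * ∑ t ∈ ρ.parts, (V2 v univ t : ℚ) + rev1 v π := by
  rw [rev1, rev1, ← mul_add, ← mul_add, π.sum_replacePart_add hP]

lemma inv_card_pos_of_mem_parts (hP : P ∈ π.parts) : (0 : ℚ) < (Fintype.card γ : ℚ)⁻¹ := by
  obtain ⟨g, -⟩ := π.nonempty_of_mem_parts hP
  have : Nonempty γ := ⟨g⟩
  positivity

lemma sum_V2_le_of_isRevMax (hmax : IsRevMax v π) (hP : P ∈ π.parts) (ρ : Finpartition P) :
    ∑ t ∈ ρ.parts, V2 v univ t ≤ V2 v univ P := by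
  have hsplit := rev1_replacePart_add (v := v) hP ρ
  have := hmax (π.replacePart P ρ)
  have key : (Fintype.card γ : ℚ)⁻¹ * ∑ t ∈ ρ.parts, (V2 v univ t : ℚ)
      ≤ (Fintype.card γ : ℚ)⁻¹ * V2 v univ P := by linarith
  exact_mod_cast le_of_mul_le_mul_left key (inv_card_pos_of_mem_parts hP)

lemma sum_V1_le_of_isRevMax (hmax : IsRevMax v π)
    (hbest : ∀ π', IsRevMax v π' → SW1 v π' ≤ SW1 v π) (hP : P ∈ π.parts) (ρ : Finpartition P)
    (hrev : V2 v univ P ≤ ∑ t ∈ ρ.parts, V2 v univ t) :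
    ∑ t ∈ ρ.parts, V1 v univ t ≤ V1 v univ P := by
  have hc := inv_card_pos_of_mem_parts hP
  have hmax' : IsRevMax v (π.replacePart P ρ) := by
    have hsplit := rev1_replacePart_add (v := v) hP ρ
    have hrev' : (V2 v univ P : ℚ) ≤ ∑ t ∈ ρ.parts, (V2 v univ t : ℚ) := by exact_mod_cast hrev
    have := mul_le_mul_of_nonneg_left hrev' hc.le
    exact fun π' => (hmax π').trans (by linarith)
  have hsplit := SW1_replacePart_add (v := v) hP ρ
  have := hbest _ hmax'
  have key : (Fintype.card γ : ℚ)⁻¹ * ∑ t ∈ ρ.parts, (V1 v univ t : ℚ)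
      ≤ (Fintype.card γ : ℚ)⁻¹ * V1 v univ P := by linarith
  exact_mod_cast le_of_mul_le_mul_left key hc

lemma sum_min_two_le_V1_add_V2 (hv : ∀ b g, v b g ≤ 1) (hβ : 1 < Fintype.card β)
    (hmax : IsRevMax v π) (hbest : ∀ π', IsRevMax v π' → SW1 v π' ≤ SW1 v π)
    (hP : P ∈ π.parts) :
    ∑ g ∈ P, min (∑ b, v b g) 2 ≤ V1 v univ P + V2 v univ P := by
  obtain ⟨b₁, hb₁, b₂, hb₂, hb, h₁, h₂⟩ := exists_vsum_eq_V1_and_vsum_eq_V2 v P hβ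
  calc ∑ g ∈ P, min (∑ b, v b g) 2 ≤ ∑ g ∈ P, (v b₁ g + v b₂ g) := by
        refine sum_le_sum fun g hg => ?_
        have hrev := sum_V2_le_of_isRevMax hmax hP (Finpartition.splitOff hg)
        have hsw := sum_V1_le_of_isRevMax hmax hbest hP (Finpartition.splitOff hg)
        rw [Finpartition.sum_splitOff hg _ (V2_empty_s13 v)] at hrev hsw
        rw [Finpartition.sum_splitOff hg _ (V1_empty v)] at hsw
        exact min_sum_two_le_of_splitOff_unprofitable v (hv · g) hg hb₁ hb₂ hb h₁ h₂ hrev hsw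
    _ = V1 v univ P + V2 v univ P := by rw [sum_add_distrib, ← h₁, ← h₂, vsum, vsum]

lemma sum_min_two_le_two_mul_V1 (hv : ∀ b g, v b g ≤ 1) (hmax : IsRevMax v π)
    (hbest : ∀ π', IsRevMax v π' → SW1 v π' ≤ SW1 v π) (hP : P ∈ π.parts) :
    ∑ g ∈ P, min (∑ b, v b g) 2 ≤ 2 * V1 v univ P := by
  rcases le_or_gt (Fintype.card β) 1 with hβ | hβ
  · exact (sum_min_two_le_V1_of_card_le_one v P (by rwa [card_univ])).trans (by omega)
  · have := V2_le_V1_s13 v P (s := univ)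
    have := sum_min_two_le_V1_add_V2 hv hβ hmax hbest hP
    omega

end Monopoly

lemma pdem_one_add_pdem_two {β γ : Type*} [Fintype β] [Fintype γ] (v : β → γ → ℕ) :
    pdem v 1 + pdem v 2 = ∑ g, min (∑ b, v b g) 2 := by
  rw [pdem, pdem, card_filter, card_filter, ← sum_add_distrib]
  refine sum_congr rfl fun g _ => ?_
  split_ifs <;> omega

theorem revmax_best_sw_ge_p1_p2_half_general
    (v : B → G → ℕ) (hv : ∀ b g, v b g ≤ 1)
    (π : Finpartition (univ : Finset G))
    (hmax : ∀ π' : Finpartition (univ : Finset G), rev1 v π' ≤ rev1 v π)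
    (hbest : ∀ π' : Finpartition (univ : Finset G),
        (∀ π'' : Finpartition (univ : Finset G), rev1 v π'' ≤ rev1 v π') →
        SW1 v π' ≤ SW1 v π) :
    ((pdem v 1 : ℚ) + (pdem v 2 : ℚ)) / (2 * (Fintype.card G : ℚ)) ≤ SW1 v π := by
  have hcount : pdem v 1 + pdem v 2 ≤ 2 * ∑ P ∈ π.parts, V1 v univ P := by
    rw [pdem_one_add_pdem_two, ← π.sum_parts_sum, mul_sum]
    exact sum_le_sum fun P hP => sum_min_two_le_two_mul_V1 hv hmax hbest hP
  calc ((pdem v 1 : ℚ) + pdem v 2) / (2 * Fintype.card G)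
      ≤ (2 * ∑ P ∈ π.parts, (V1 v univ P : ℚ)) / (2 * Fintype.card G) := by
        gcongr
        exact_mod_cast hcount
    _ = SW1 v π := by rw [SW1, mul_div_mul_left _ _ two_ne_zero, div_eq_inv_mul]

/-- a welfare-best revenue-maximizing partition has social
welfare at least `(p¹ + p²)/(2·|G|)`. -/
theorem revmax_best_sw_ge_p1_p2_half [Nonempty B] [Nonempty G]
    (v : B → G → ℕ) (hv : ∀ b g, v b g ≤ 1)
    (π : Finpartition (univ : Finset G))
    (hmax : ∀ π' : Finpartition (univ : Finset G), rev1 v π' ≤ rev1 v π)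
    (hbest : ∀ π' : Finpartition (univ : Finset G),
        (∀ π'' : Finpartition (univ : Finset G), rev1 v π'' ≤ rev1 v π') →
        SW1 v π' ≤ SW1 v π) :
    ((pdem v 1 : ℚ) + (pdem v 2 : ℚ)) / (2 * (Fintype.card G : ℚ)) ≤ SW1 v π :=
  revmax_best_sw_ge_p1_p2_half_general v hv π hmax hbest
end

section
/- In the multi-seller setting, for every seller profile τ and every buyer assignment σ, SW(τ,σ) ≤ (c_1 + min(|S|,|B|)·p^2)/(|S|·|G|), where c_1 := p^1 − p^2 is the number of goods with unit demand. -/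
open Finset

variable {B G S : Type*} [Fintype B] [Fintype G] [Fintype S]
variable [DecidableEq B] [DecidableEq G] [DecidableEq S]

/-! With binary valuations a buyer's value for a bundle is at most the number of goods in it that
somebody at the same seller wants, so seller `s` creates welfare at most the number of goods
demanded by its clientele. Counting per good instead of per seller, a good with demand `d`
contributes to at most `min |S| d` sellers: this is `1` for unit demand and at most
`min |S| |B|` otherwise. -/

lemma Finpartition.sum_card_filter_parts {α : Type*} [DecidableEq α] {A : Finset α}
    (P : Finpartition A) (p : α → Prop) [DecidablePred p] :
    ∑ t ∈ P.parts, #(t.filter p) = #(A.filter p) := by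
  simp_rw [card_filter]
  exact (sum_biUnion P.supIndep.pairwiseDisjoint).symm.trans (by rw [P.biUnion_parts])

lemma Finset.card_filter_ne_zero_eq_sum {ι : Type*} (s : Finset ι) {f : ι → ℕ}
    (hf : ∀ i ∈ s, f i ≤ 1) : #(s.filter (f · ≠ 0)) = ∑ i ∈ s, f i := by
  rw [card_filter]
  refine sum_congr rfl fun i hi => ?_
  have := hf i hi
  split_ifs <;> omega

lemma Nat.min_le_ite_add_min_mul_ite {k n d : ℕ} (hd : d ≤ n) :
    min k d ≤ (if d = 1 then 1 else 0) + min k n * (if 2 ≤ d then 1 else 0) := by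
  split_ifs <;> omega

section Welfare

variable (v : B → G → ℕ)

def goodsDemandedBy (Bb : Finset B) : Finset G :=
  univ.filter fun g => ∃ b ∈ Bb, v b g ≠ 0

omit [DecidableEq B] [DecidableEq G] in
lemma pdem_one : pdem v 1 = #(univ.filter fun g => ∑ b : B, v b g = 1) + pdem v 2 := by
  simp_rw [pdem, card_filter, ← sum_add_distrib]
  refine sum_congr rfl fun g _ => ?_
  split_ifs <;> omega

omit [DecidableEq B] [DecidableEq G] in
lemma sum_card_goodsDemandedBy_buyersOf (σ : B → S) :
    ∑ s : S, #(goodsDemandedBy v (buyersOf σ s)) =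
      ∑ g : G, #((univ.filter fun b => v b g ≠ 0).image σ) := by
  simp_rw [goodsDemandedBy, card_filter]
  rw [sum_comm]
  refine sum_congr rfl fun g _ => ?_
  rw [← card_filter]
  congr 1
  ext s
  simp [buyersOf, and_comm]

variable {v} (hv : ∀ b g, v b g ≤ 1)
include hv

omit [Fintype B] [DecidableEq B] in
lemma vsum_le_card_filter_goodsDemandedBy {Bb : Finset B} {b : B} (hb : b ∈ Bb)
    (Gb : Finset G) : vsum v b Gb ≤ #(Gb.filter (· ∈ goodsDemandedBy v Bb)) := by
  rw [card_filter, vsum]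
  refine sum_le_sum fun g _ => ?_
  split_ifs with hg
  · exact hv b g
  · simp only [goodsDemandedBy, mem_filter, mem_univ, true_and, not_exists, not_and,
      not_not] at hg
    exact (hg b hb).le

omit [Fintype B] [DecidableEq B] in
lemma sum_V1_parts_le_card_goodsDemandedBy (Bb : Finset B) (P : Finpartition (univ : Finset G)) :
    ∑ Gb ∈ P.parts, V1 v Bb Gb ≤ #(goodsDemandedBy v Bb) := by
  calc ∑ Gb ∈ P.parts, V1 v Bb Gb
      ≤ ∑ Gb ∈ P.parts, #(Gb.filter (· ∈ goodsDemandedBy v Bb)) :=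
        sum_le_sum fun Gb _ =>
          Finset.sup_le fun _ hb => vsum_le_card_filter_goodsDemandedBy hv hb Gb
    _ = #(goodsDemandedBy v Bb) := by
        rw [P.sum_card_filter_parts, filter_mem_eq_inter, univ_inter]

omit [DecidableEq B] in
lemma sum_sum_V1_buyersOf_le (τ : S → Finpartition (univ : Finset G)) (σ : B → S) :
    ∑ s : S, ∑ Gb ∈ (τ s).parts, V1 v (buyersOf σ s) Gb ≤
      #(univ.filter fun g => ∑ b : B, v b g = 1) +
        min (Fintype.card S) (Fintype.card B) * pdem v 2 := by
  have card_demanders (g : G) : #(univ.filter fun b => v b g ≠ 0) = ∑ b : B, v b g :=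
    card_filter_ne_zero_eq_sum univ fun b _ => hv b g
  calc ∑ s : S, ∑ Gb ∈ (τ s).parts, V1 v (buyersOf σ s) Gb
      ≤ ∑ s : S, #(goodsDemandedBy v (buyersOf σ s)) :=
        sum_le_sum fun s _ => sum_V1_parts_le_card_goodsDemandedBy hv _ (τ s)
    _ = ∑ g : G, #((univ.filter fun b => v b g ≠ 0).image σ) :=
        sum_card_goodsDemandedBy_buyersOf v σ
    _ ≤ ∑ g : G, min (Fintype.card S) (∑ b : B, v b g) :=
        sum_le_sum fun g _ =>
          le_min (card_le_univ _) (card_demanders g ▸ card_image_le)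
    _ ≤ ∑ g : G, ((if ∑ b : B, v b g = 1 then 1 else 0) +
          min (Fintype.card S) (Fintype.card B) * (if 2 ≤ ∑ b : B, v b g then 1 else 0)) :=
        sum_le_sum fun g _ => Nat.min_le_ite_add_min_mul_ite (card_demanders g ▸ card_le_univ _)
    _ = _ := by rw [sum_add_distrib, ← mul_sum, pdem, ← card_filter, ← card_filter]

end Welfare

theorem sw_upper_bound_competition_general
    (v : B → G → ℕ) (hv : ∀ b g, v b g ≤ 1)
    (τ : S → Finpartition (univ : Finset G)) (σ : B → S) :
    SWm v τ σ ≤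
      (((pdem v 1 : ℚ) - (pdem v 2 : ℚ)) +
          (min (Fintype.card S) (Fintype.card B) : ℚ) * (pdem v 2 : ℚ)) /
        ((Fintype.card S : ℚ) * (Fintype.card G : ℚ)) := by
  have welfare_le : (∑ s : S, ∑ Gb ∈ (τ s).parts, V1 v (buyersOf σ s) Gb : ℚ) ≤
      #(univ.filter fun g => ∑ b : B, v b g = 1) +
        (min (Fintype.card S) (Fintype.card B) : ℚ) * pdem v 2 := by
    exact_mod_cast sum_sum_V1_buyersOf_le hv τ σ
  rw [SWm, inv_mul_eq_div, pdem_one, Nat.cast_add, add_sub_cancel_right]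
  exact div_le_div_of_nonneg_right welfare_le (by positivity)

/-- an upper bound on the social welfare in the multi-seller
game: `SW ≤ (c₁ + min(|S|,|B|)·p²)/(|S|·|G|)` with `c₁ = p¹ − p²`. -/
theorem sw_upper_bound_competition [Nonempty B] [Nonempty G] [Nonempty S]
    (v : B → G → ℕ) (hv : ∀ b g, v b g ≤ 1)
    (τ : S → Finpartition (univ : Finset G)) (σ : B → S) :
    SWm v τ σ ≤
      (((pdem v 1 : ℚ) - (pdem v 2 : ℚ)) +
          (min (Fintype.card S) (Fintype.card B) : ℚ) * (pdem v 2 : ℚ)) /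
        ((Fintype.card S : ℚ) * (Fintype.card G : ℚ)) :=
  sw_upper_bound_competition_general v hv τ σ
end
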